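/- Let t, x, y lie in the region 0 < t ≤ 1/2, 0 ≤ y ≤ 1, x ≥ 200, and let γ := M_t((1−y+ix)/2)/M_t((1+y−ix)/2). Then |γ| ≤ e^{0.02y}·(x/(4π))^{−y/2}. -/

import Mathlib

/-- The Stirling-type approximation `M₀` to the completed zeta factor. -/
noncomputable def M0 (s : ℂ) : ℂ :=
  (1 / 8) * (s * (s - 1) / 2) * (Real.pi : ℂ) ^ (-s / 2) * (Real.sqrt (2 * Real.pi) : ℂ) *
    Complex.exp ((s / 2 - 1 / 2) * Complex.log (s / 2) - s / 2)

/-- The logarithmic derivative `α` of `M₀`. -/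
noncomputable def alph (s : ℂ) : ℂ :=
  1 / (2 * s) + 1 / (s - 1) + (1 / 2) * Complex.log (s / (2 * Real.pi))

/-- The deformation `M_t` of `M₀`. -/
noncomputable def Mt (t : ℝ) (s : ℂ) : ℂ :=
  Complex.exp ((t / 4 : ℂ) * (alph s) ^ 2) * M0 s

/-- The coefficients `b_n^t = exp((t/4) log² n)`. -/
noncomputable def bcoef (t : ℝ) (n : ℕ) : ℝ :=
  Real.exp ((t / 4) * (Real.log n) ^ 2)

open Complex

/-- The derivative of `alph`. -/
noncomputable def alphd (s : ℂ) : ℂ := -(1/(2*s^2)) - 1/((s-1)^2) + 1/(2*s)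

lemma log_div_real (z : ℂ) (r : ℝ) (hr : 0 < r) (hz : z ≠ 0) :
    Complex.log (z / (r:ℂ)) = Complex.log z - (Real.log r : ℂ) := by
  rw [div_eq_mul_inv, ← Complex.ofReal_inv,
    Complex.log_mul_ofReal r⁻¹ (by positivity) z hz, Real.log_inv]
  push_cast; ring

lemma s_ne {s : ℂ} (hs : s.im ≠ 0) : s ≠ 0 := fun h => hs (by simp [h])

lemma s1_ne {s : ℂ} (hs : s.im ≠ 0) : s - 1 ≠ 0 := fun h => hs (by
  have : s = 1 := by linear_combination h
  simp [this])

lemma slit_half {s : ℂ} (hs : s.im ≠ 0) : s / 2 ∈ Complex.slitPlane := by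
  right; simpa using hs

lemma slit_div_two_pi {s : ℂ} (hs : s.im ≠ 0) : s / (2 * (Real.pi:ℂ)) ∈ Complex.slitPlane := by
  right
  have h : (2 : ℂ) * (Real.pi:ℂ) = ((2 * Real.pi : ℝ) : ℂ) := by push_cast; ring
  rw [h, Complex.div_ofReal_im]
  have := Real.pi_pos
  intro h'
  exact hs (by
    rcases div_eq_zero_iff.mp h' with h'' | h''
    · exact h''
    · linarith)

lemma hasDerivAt_alph {s : ℂ} (hs : s.im ≠ 0) : HasDerivAt alph (alphd s) s := by
  have h0 := s_ne hs
  have h2 : (2:ℂ) * s ≠ 0 := by simpa using h0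
  have h1 := s1_ne hs
  have hπ : (Real.pi:ℂ) ≠ 0 := by simpa using Real.pi_ne_zero
  have hd1 : HasDerivAt (fun z : ℂ => 1 / (2 * z)) (-(1/(2*s^2))) s := by
    have := (((hasDerivAt_id s).const_mul (2:ℂ)).inv h2)
    simp only [one_div]
    refine this.congr_deriv ?_
    simp only [id]; field_simp
  have hd2 : HasDerivAt (fun z : ℂ => 1 / (z - 1)) (-(1/((s-1)^2))) s := by
    have := ((hasDerivAt_id s).sub_const (1:ℂ)).inv h1
    simp only [one_div]
    refine this.congr_deriv ?_
    simp only [id_eq, neg_div, one_div]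
  have hdiv : HasDerivAt (fun z : ℂ => z / (2 * (Real.pi:ℂ))) (1 / (2 * (Real.pi:ℂ))) s := by
    simpa [div_eq_mul_inv] using (hasDerivAt_id s).mul_const ((2 * (Real.pi:ℂ)))⁻¹
  have hd3 : HasDerivAt (fun z : ℂ => (1/2 : ℂ) * Complex.log (z / (2 * (Real.pi:ℂ))))
      ((1/2) * (1/s)) s := by
    have := (hdiv.clog (slit_div_two_pi hs)).const_mul (1/2 : ℂ)
    refine this.congr_deriv ?_
    have h2π : (2:ℂ) * (Real.pi:ℂ) ≠ 0 := by simp [hπ]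
    field_simp
  have h := (hd1.add hd2).add hd3
  have heq : alph = fun z : ℂ => 1 / (2*z) + 1/(z-1) + (1/2:ℂ) * Complex.log (z / (2*(Real.pi:ℂ))) := rfl
  rw [heq]
  refine h.congr_deriv ?_
  unfold alphd; field_simp; ring

lemma hasDerivAt_M0 {s : ℂ} (hs : s.im ≠ 0) : HasDerivAt M0 (alph s * M0 s) s := by
  have h0 := s_ne hs
  have h1 := s1_ne hs
  have hπ : (Real.pi:ℂ) ≠ 0 := by simpa using Real.pi_ne_zero
  have hA : HasDerivAt (fun z : ℂ => (1/8:ℂ) * (z * (z - 1) / 2)) ((1/8:ℂ) * ((2*s-1)/2)) s := by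
    have := (((hasDerivAt_id s).mul ((hasDerivAt_id s).sub_const 1)).div_const 2).const_mul (1/8:ℂ)
    refine this.congr_deriv ?_
    simp only [id_eq]; ring
  have hB : HasDerivAt (fun z : ℂ => (Real.pi:ℂ) ^ (-z/2))
      ((Real.pi:ℂ) ^ (-s/2) * Complex.log (Real.pi:ℂ) * (-1/2)) s := by
    have hf : HasDerivAt (fun z : ℂ => -z/2) (-1/2 : ℂ) s := by
      simpa using ((hasDerivAt_id s).neg.div_const 2)
    exact hf.const_cpow (Or.inl hπ)
  have hlin : HasDerivAt (fun z : ℂ => z/2 - 1/2) (1/2 : ℂ) s := by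
    simpa using ((hasDerivAt_id s).div_const 2).sub_const (1/2:ℂ)
  have hhalf : HasDerivAt (fun z : ℂ => z/2) ((1:ℂ)/2) s := by
    simpa using (hasDerivAt_id s).div_const 2
  have hlog : HasDerivAt (fun z : ℂ => Complex.log (z/2)) ((1/2:ℂ) / (s/2)) s :=
    hhalf.clog (slit_half hs)
  have hD : HasDerivAt (fun z : ℂ => Complex.exp ((z/2 - 1/2) * Complex.log (z/2) - z/2))
      (Complex.exp ((s/2 - 1/2) * Complex.log (s/2) - s/2) *
        ((1/2) * Complex.log (s/2) + (s/2 - 1/2) * ((1/2:ℂ)/(s/2)) - 1/2)) s :=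
    ((hlin.mul hlog).sub hhalf).cexp
  have hM := (((hA.mul hB).mul_const ((Real.sqrt (2*Real.pi) : ℝ):ℂ)).mul hD)
  have hfun : M0 = fun z : ℂ => ((1/8:ℂ) * (z * (z - 1) / 2) * ((Real.pi:ℂ) ^ (-z/2)) *
      ((Real.sqrt (2*Real.pi) : ℝ):ℂ)) * Complex.exp ((z/2 - 1/2) * Complex.log (z/2) - z/2) := rfl
  rw [hfun]
  refine hM.congr_deriv ?_
  have hlogpi : Complex.log (Real.pi:ℂ) = ((Real.log Real.pi : ℝ):ℂ) :=
    (Complex.ofReal_log Real.pi_pos.le).symm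
  have hsplit : Complex.log (s / (2 * (Real.pi:ℂ))) =
      Complex.log (s/2) - ((Real.log Real.pi : ℝ):ℂ) := by
    have h : s / (2 * (Real.pi:ℂ)) = (s/2) / ((Real.pi:ℝ):ℂ) := by ring
    rw [h, log_div_real _ _ Real.pi_pos (by simpa using h0)]
  simp only [alph, M0, hsplit, hlogpi, Pi.mul_apply]
  generalize Complex.exp ((s/2 - 1/2) * Complex.log (s/2) - s/2) = E
  generalize hP : (Real.pi:ℂ) ^ (-s/2) = P
  generalize Complex.log (s/2) = lg
  generalize ((Real.log Real.pi : ℝ):ℂ) = lp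
  generalize ((Real.sqrt (2*Real.pi) : ℝ):ℂ) = c
  rw [show ((1:ℂ)/(2*s) + 1/(s-1) + 1/2 * (lg - lp)) * (1/8 * (s * (s-1)/2) * P * c * E)
      = (P * c * E) * (((1:ℂ)/(2*s) + 1/(s-1) + 1/2 * (lg - lp)) * (1/8 * (s * (s-1)/2)))
      from by ring,
    show ((1:ℂ)/8 * ((2*s-1)/2) * P + 1/8 * (s*(s-1)/2) * (P * lp * (-1/2))) * c * E
        + 1/8 * (s*(s-1)/2) * P * c * (E * (1/2 * lg + (s/2 - 1/2) * (1/2/(s/2)) - 1/2))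
      = (P * c * E) * ((1:ℂ)/8 * ((2*s-1)/2) + 1/8 * (s*(s-1)/2) * (lp * (-1/2))
        + 1/8 * (s*(s-1)/2) * (1/2 * lg + (s/2 - 1/2) * (1/2/(s/2)) - 1/2))
      from by ring]
  congr 1
  have hi : s * s⁻¹ = 1 := mul_inv_cancel₀ h0
  have hk : (s-1) * (s-1)⁻¹ = 1 := mul_inv_cancel₀ h1
  linear_combination ((s-1)*(2-s)/32 + 1/8 - 3*s/16 + s^2/16) * hi + (s/16 - s/8) * hk

lemma M0_ne_zero {s : ℂ} (hs : s.im ≠ 0) : M0 s ≠ 0 := by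
  have h0 := s_ne hs
  have h1 := s1_ne hs
  have hπ : (Real.pi:ℂ) ≠ 0 := by simpa using Real.pi_ne_zero
  unfold M0
  have h8 : (1/8 : ℂ) ≠ 0 := by norm_num
  have hX : s * (s-1) / 2 ≠ 0 := div_ne_zero (mul_ne_zero h0 h1) (by norm_num)
  have hP : (Real.pi:ℂ) ^ (-s/2) ≠ 0 := by
    intro h; exact hπ ((Complex.cpow_eq_zero_iff _ _).mp h).1
  have hc : ((Real.sqrt (2*Real.pi):ℝ):ℂ) ≠ 0 := by
    simp only [ne_eq, Complex.ofReal_eq_zero]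
    exact Real.sqrt_ne_zero'.mpr (by positivity)
  exact mul_ne_zero (mul_ne_zero (mul_ne_zero (mul_ne_zero h8 hX) hP) hc)
    (Complex.exp_ne_zero _)

lemma Mt_ne_zero {t : ℝ} {s : ℂ} (hs : s.im ≠ 0) : Mt t s ≠ 0 :=
  mul_ne_zero (Complex.exp_ne_zero _) (M0_ne_zero hs)

lemma hasDerivAt_Mt {t : ℝ} {s : ℂ} (hs : s.im ≠ 0) :
    HasDerivAt (Mt t) ((alph s + (t:ℂ)/2 * alph s * alphd s) * Mt t s) s := by
  have h1 := hasDerivAt_alph hs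
  have hsq : HasDerivAt (fun z : ℂ => ((t:ℂ)/4) * (alph z)^2)
      ((t:ℂ)/4 * (2 * alph s * alphd s)) s := by
    have := (h1.pow 2).const_mul ((t:ℂ)/4)
    refine this.congr_deriv ?_
    ring
  have hexp := hsq.cexp
  have hM := hexp.mul (hasDerivAt_M0 hs)
  have hfun : Mt t = fun z : ℂ => Complex.exp (((t:ℂ)/4) * (alph z)^2) * M0 z := rfl
  rw [hfun]
  refine hM.congr_deriv ?_
  ring

lemma conj_aux {s : ℂ} (hs : s.im ≠ 0) (r : ℝ) (hr : 0 < r) :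
    Complex.log ((starRingEnd ℂ) s / (r:ℂ)) = (starRingEnd ℂ) (Complex.log (s / (r:ℂ))) := by
  have h : (starRingEnd ℂ) s / (r:ℂ) = (starRingEnd ℂ) (s / (r:ℂ)) := by
    rw [map_div₀, Complex.conj_ofReal]
  rw [h]
  refine Complex.log_conj _ (fun hpi => ?_)
  obtain ⟨-, h'⟩ := Complex.arg_eq_pi_iff.mp hpi
  rw [Complex.div_ofReal_im] at h'
  exact hs (by
    rcases div_eq_zero_iff.mp h' with h'' | h''
    · exact h''
    · linarith)

lemma alph_conj {s : ℂ} (hs : s.im ≠ 0) :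
    alph ((starRingEnd ℂ) s) = (starRingEnd ℂ) (alph s) := by
  have h2π : (0:ℝ) < 2 * Real.pi := by positivity
  have h : (2:ℂ) * (Real.pi:ℂ) = ((2 * Real.pi : ℝ):ℂ) := by push_cast; ring
  unfold alph
  rw [h, conj_aux hs _ h2π]
  simp [map_add, map_div₀, map_mul, map_sub, map_one, map_ofNat, Complex.conj_ofReal]

lemma M0_conj {s : ℂ} (hs : s.im ≠ 0) :
    M0 ((starRingEnd ℂ) s) = (starRingEnd ℂ) (M0 s) := by
  have hπarg : (Real.pi:ℂ).arg ≠ Real.pi := by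
    rw [Complex.arg_ofReal_of_nonneg Real.pi_pos.le]
    exact Real.pi_ne_zero.symm
  have hcpow : (Real.pi:ℂ) ^ (-(starRingEnd ℂ) s / 2) =
      (starRingEnd ℂ) ((Real.pi:ℂ) ^ (-s/2)) := by
    have h : -(starRingEnd ℂ) s / 2 = (starRingEnd ℂ) (-s/2) := by
      rw [map_div₀, map_neg, map_ofNat]
    rw [h, Complex.cpow_conj _ _ hπarg, Complex.conj_ofReal]
  have hlog : Complex.log ((starRingEnd ℂ) s / 2) = (starRingEnd ℂ) (Complex.log (s/2)) := by
    have h2 : ((2:ℝ):ℂ) = (2:ℂ) := by norm_num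
    rw [← h2, conj_aux hs 2 (by norm_num)]
  unfold M0
  rw [hcpow, hlog]
  simp only [map_mul, map_sub, map_div₀, map_one, map_ofNat, Complex.conj_ofReal,
    ← Complex.exp_conj]

lemma Mt_conj {t : ℝ} {s : ℂ} (hs : s.im ≠ 0) :
    Mt t ((starRingEnd ℂ) s) = (starRingEnd ℂ) (Mt t s) := by
  unfold Mt
  rw [alph_conj hs, M0_conj hs]
  simp only [map_mul, map_div₀, map_pow, Complex.conj_ofReal, map_ofNat, ← Complex.exp_conj]

lemma hasDerivAt_log_abs {f : ℝ → ℂ} {f' : ℂ} {σ : ℝ} (hf : HasDerivAt f f' σ)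
    (h0 : f σ ≠ 0) :
    HasDerivAt (fun σ => Real.log (‖f σ‖)) ((f' / f σ).re) σ := by
  have hre : HasDerivAt (fun σ => (f σ).re) f'.re σ :=
    Complex.reCLM.hasFDerivAt.comp_hasDerivAt σ hf
  have him : HasDerivAt (fun σ => (f σ).im) f'.im σ :=
    Complex.imCLM.hasFDerivAt.comp_hasDerivAt σ hf
  have hns : HasDerivAt (fun σ => Complex.normSq (f σ))
      (2 * ((f σ).re * f'.re + (f σ).im * f'.im)) σ := by
    have := (hre.mul hre).add (him.mul him)
    simp only [Complex.normSq_apply]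
    refine this.congr_deriv ?_
    ring
  have hnz : Complex.normSq (f σ) ≠ 0 := by
    simpa [Complex.normSq_eq_zero] using h0
  have hlog := (Real.hasDerivAt_log hnz).comp σ hns
  have heq : (fun σ => Real.log (‖f σ‖))
      = fun σ => Real.log (Complex.normSq (f σ)) / 2 := by
    funext σ'
    rw [Complex.norm_def, Real.log_sqrt (Complex.normSq_nonneg _)]
  rw [heq]
  refine (hlog.div_const 2).congr_deriv ?_
  rw [Complex.div_re]
  field_simp [Function.comp]

set_option maxHeartbeats 2000000 in
lemma key_bound {x σ t : ℝ} (hx : 200 ≤ x) (hσ0 : 0 ≤ σ) (hσ1 : σ ≤ 1)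
    (ht0 : 0 ≤ t) (ht : t ≤ 1/2) :
    Real.log (x/(4*Real.pi)) / 2 - 0.02 ≤
      (alph ((σ:ℂ) + ((x/2 : ℝ):ℂ) * Complex.I)
        + (t:ℂ)/2 * alph ((σ:ℂ) + ((x/2 : ℝ):ℂ) * Complex.I)
          * alphd ((σ:ℂ) + ((x/2 : ℝ):ℂ) * Complex.I)).re := by
  have hπ := Real.pi_pos
  have hπ4 : Real.pi ≤ 3.15 := by
    have := Real.pi_lt_d2
    linarith
  obtain ⟨w, hw⟩ : ∃ w : ℂ, (σ:ℂ) + ((x/2 : ℝ):ℂ) * Complex.I = w := ⟨_, rfl⟩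
  rw [hw]
  have hre : w.re = σ := by rw [← hw]; simp
  have him : w.im = x/2 := by rw [← hw]; simp
  have hxpos : (0:ℝ) < x := by linarith
  have him0 : w.im ≠ 0 := by rw [him]; positivity
  set L := Real.log (x/(4*Real.pi)) with hL
  -- basic abs bounds
  have habs_ge : x/2 ≤ ‖w‖ := by
    have := Complex.abs_im_le_norm w
    rw [him] at this
    calc x/2 = |x/2| := by rw [abs_of_pos (by positivity)]
    _ ≤ _ := this
  have habs_le : ‖w‖ ≤ x/2 + 1 := by
    have := Complex.norm_le_abs_re_add_abs_im w
    rw [hre, him, _root_.abs_of_nonneg hσ0, _root_.abs_of_pos (by positivity)] at this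
    linarith
  have habs1_ge : x/2 ≤ ‖w - 1‖ := by
    have h1 : (w - 1).im = x/2 := by rw [Complex.sub_im, him]; simp
    have := Complex.abs_im_le_norm (w - 1)
    rw [h1] at this
    calc x/2 = |x/2| := by rw [abs_of_pos (by positivity)]
    _ ≤ _ := this
  have hwne : w ≠ 0 := fun h => him0 (by simp [h])
  have hw1ne : w - 1 ≠ 0 := fun h => him0 (by
    have : w = 1 := by linear_combination h
    simp [this])
  -- abs (w / (2π))
  have habsd : ‖w / (2*(Real.pi:ℂ))‖ = ‖w‖ / (2*Real.pi) := by
    rw [norm_div]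
    congr 1
    simp [Complex.norm_real, abs_of_pos hπ]
  have hq_ge : x/(4*Real.pi) ≤ ‖w / (2*(Real.pi:ℂ))‖ := by
    rw [habsd]
    rw [div_le_div_iff₀ (by positivity) (by positivity)]
    nlinarith [habs_ge]
  have hq_le : ‖w / (2*(Real.pi:ℂ))‖ ≤ (x/(4*Real.pi)) * 1.01 := by
    rw [habsd]
    rw [div_le_iff₀ (by positivity)]
    have : x/2 + 1 ≤ (x/2) * 1.01 := by nlinarith
    calc ‖w‖ ≤ x/2 + 1 := habs_le
    _ ≤ x/2 * 1.01 := this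
    _ = x/(4*Real.pi) * 1.01 * (2*Real.pi) := by field_simp; ring
  have hq1 : (1:ℝ) ≤ x/(4*Real.pi) := by
    rw [le_div_iff₀ (by positivity)]
    nlinarith
  have hL0 : 0 ≤ L := Real.log_nonneg hq1
  -- L ≤ 0.04 x
  have hLx : L ≤ 0.04 * x := by
    have hu : (0:ℝ) < x/(4*Real.pi) := by positivity
    have h1 : L = 2 * Real.log (Real.sqrt (x/(4*Real.pi))) := by
      rw [Real.log_sqrt hu.le]; ring
    have h2 : Real.log (Real.sqrt (x/(4*Real.pi))) ≤ Real.sqrt (x/(4*Real.pi)) - 1 :=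
      Real.log_le_sub_one_of_pos (Real.sqrt_pos.mpr hu)
    have h3 : Real.sqrt (x/(4*Real.pi)) ≤ 0.02 * x := by
      rw [show (0.02:ℝ) * x = Real.sqrt ((0.02*x)^2) from (Real.sqrt_sq (by positivity)).symm]
      apply Real.sqrt_le_sqrt
      rw [div_le_iff₀ (by positivity)]
      have hπ3 : 3.14 ≤ Real.pi := by
        have := Real.pi_gt_d6
        linarith
      nlinarith [mul_nonneg (by linarith : (0:ℝ) ≤ x - 200) hxpos.le]
    linarith
  -- Re(alph w) ≥ L/2 - 0.0001
  have hrealph : L/2 - 0.0001 ≤ (alph w).re := by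
    have e1 : (1 / (2*w)).re = 2*σ / Complex.normSq (2*w) := by
      rw [one_div, Complex.inv_re]
      congr 1
      simp [Complex.mul_re, hre, him]
    have h1 : 0 ≤ (1 / (2*w)).re := by
      rw [e1]
      exact div_nonneg (by linarith) (Complex.normSq_nonneg _)
    have e2 : (1 / (w-1)).re = (σ - 1) / Complex.normSq (w-1) := by
      rw [one_div, Complex.inv_re]
      congr 1
      simp [Complex.sub_re, hre]
    have hns1 : (x/2)^2 ≤ Complex.normSq (w-1) := by
      rw [Complex.normSq_apply]
      have h1 : (w-1).im = x/2 := by rw [Complex.sub_im, him]; simp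
      have h2 : (w-1).re = σ - 1 := by rw [Complex.sub_re, hre]; simp
      rw [h1, h2]
      nlinarith
    have hN : (10000:ℝ) ≤ Complex.normSq (w-1) := by nlinarith [hns1]
    have h2 : -(0.0001:ℝ) ≤ (1 / (w-1)).re := by
      rw [e2]
      have hpos : (0:ℝ) < Complex.normSq (w-1) := by linarith
      have hstep : -(0.0001:ℝ) * Complex.normSq (w-1) ≤ σ - 1 := by linarith
      calc -(0.0001:ℝ) = (-(0.0001:ℝ) * Complex.normSq (w-1)) / Complex.normSq (w-1) :=
            (mul_div_cancel_right₀ _ hpos.ne').symm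
      _ ≤ (σ - 1)/Complex.normSq (w-1) := by gcongr
    have e3 : ((1/2 : ℂ) * Complex.log (w / (2*(Real.pi:ℂ)))).re
        = Real.log (‖w / (2*(Real.pi:ℂ))‖) / 2 := by
      rw [show ((1/2 : ℂ) * Complex.log (w / (2*(Real.pi:ℂ)))) =
        Complex.log (w / (2*(Real.pi:ℂ))) / 2 from by ring]
      rw [Complex.div_re]
      simp [Complex.log_re, Complex.normSq_apply]
      ring
    have h3 : L/2 ≤ ((1/2 : ℂ) * Complex.log (w / (2*(Real.pi:ℂ)))).re := by
      rw [e3]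
      have := Real.log_le_log (by positivity) hq_ge
      linarith
    have : alph w = 1/(2*w) + 1/(w-1) + (1/2:ℂ) * Complex.log (w/(2*(Real.pi:ℂ))) := rfl
    rw [this]
    simp only [Complex.add_re]
    linarith
  -- abs bounds on alph
  have habsw_pos : (0:ℝ) < ‖w‖ := lt_of_lt_of_le (by positivity) habs_ge
  have habsw1_pos : (0:ℝ) < ‖w-1‖ := lt_of_lt_of_le (by positivity) habs1_ge
  have ha1 : ‖1/(2*w)‖ ≤ 1/x := by
    rw [norm_div, norm_one, norm_mul, Complex.norm_two]
    exact one_div_le_one_div_of_le hxpos (by nlinarith [habs_ge])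
  have ha2 : ‖1/(w-1)‖ ≤ 2/x := by
    rw [norm_div, norm_one, show (2:ℝ)/x = 1/(x/2) from by field_simp]
    exact one_div_le_one_div_of_le (by positivity) habs1_ge
  have hlogq_le : Real.log (‖w / (2*(Real.pi:ℂ))‖) ≤ L + 0.01 := by
    have h1 : Real.log (‖w / (2*(Real.pi:ℂ))‖)
        ≤ Real.log ((x/(4*Real.pi)) * 1.01) :=
      Real.log_le_log (lt_of_lt_of_le (by positivity) hq_ge) hq_le
    have h2 : Real.log ((x/(4*Real.pi)) * 1.01) = L + Real.log 1.01 := by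
      rw [Real.log_mul (by positivity) (by norm_num)]
    have h3 : Real.log 1.01 ≤ 0.01 := by
      have := Real.log_le_sub_one_of_pos (show (0:ℝ) < 1.01 by norm_num)
      linarith
    linarith
  have hlogq_ge : 0 ≤ Real.log (‖w / (2*(Real.pi:ℂ))‖) :=
    Real.log_nonneg (le_trans hq1 hq_ge)
  have hargle : |(w / (2*(Real.pi:ℂ))).arg| ≤ Real.pi/2 := by
    rw [Complex.abs_arg_le_pi_div_two_iff]
    have h : (2:ℂ) * (Real.pi:ℂ) = ((2*Real.pi : ℝ):ℂ) := by push_cast; ring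
    rw [h, Complex.div_ofReal_re, hre]
    positivity
  have ha3 : ‖(1/2:ℂ) * Complex.log (w/(2*(Real.pi:ℂ)))‖ ≤ L/2 + 0.005 + Real.pi/4 := by
    rw [norm_mul]
    have habs12 : ‖(1/2:ℂ)‖ = 1/2 := by
      rw [norm_div, norm_one, Complex.norm_two]
    rw [habs12]
    have htri := Complex.norm_le_abs_re_add_abs_im (Complex.log (w/(2*(Real.pi:ℂ))))
    rw [Complex.log_re, Complex.log_im] at htri
    have hre_abs : |Real.log (‖w / (2*(Real.pi:ℂ))‖)| ≤ L + 0.01 := by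
      rw [_root_.abs_of_nonneg hlogq_ge]; exact hlogq_le
    have : ‖Complex.log (w/(2*(Real.pi:ℂ)))‖ ≤ (L + 0.01) + Real.pi/2 := by
      linarith [hargle]
    linarith
  have habs_alph : ‖alph w‖ ≤ L/2 + 1.6 := by
    have : alph w = 1/(2*w) + 1/(w-1) + (1/2:ℂ) * Complex.log (w/(2*(Real.pi:ℂ))) := rfl
    rw [this]
    have htri1 := norm_add_le (1/(2*w) + 1/(w-1)) ((1/2:ℂ) * Complex.log (w/(2*(Real.pi:ℂ))))
    have htri2 := norm_add_le (1/(2*w)) (1/(w-1))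
    have hx1 : (1:ℝ)/x ≤ 1/200 := by
      rw [div_le_div_iff₀ hxpos (by norm_num)]; linarith
    have hx2 : (2:ℝ)/x ≤ 2/200 := by
      rw [div_le_div_iff₀ hxpos (by norm_num)]; linarith
    have hπ4' : Real.pi/4 ≤ 0.7875 := by linarith
    calc ‖1/(2*w) + 1/(w-1) + (1/2:ℂ) * Complex.log (w/(2*(Real.pi:ℂ)))‖
        ≤ ‖1/(2*w)‖ + ‖1/(w-1)‖
          + ‖(1/2:ℂ) * Complex.log (w/(2*(Real.pi:ℂ)))‖ := by linarith
    _ ≤ 1/x + 2/x + (L/2 + 0.005 + Real.pi/4) := by linarith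
    _ ≤ L/2 + 1.6 := by linarith
  -- abs bound on alphd
  have hb1 : ‖1/(2*w^2)‖ ≤ 2/x^2 := by
    rw [norm_div, norm_one, norm_mul, Complex.norm_two, norm_pow,
      show (2:ℝ)/x^2 = 1/(x^2/2) from by field_simp]
    exact one_div_le_one_div_of_le (by positivity) (by nlinarith [habs_ge])
  have hb2 : ‖1/((w-1)^2)‖ ≤ 4/x^2 := by
    rw [norm_div, norm_one, norm_pow,
      show (4:ℝ)/x^2 = 1/(x^2/4) from by field_simp]
    exact one_div_le_one_div_of_le (by positivity) (by nlinarith [habs1_ge])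
  have habs_alphd : ‖alphd w‖ ≤ 1/x + 6/x^2 := by
    have : alphd w = -(1/(2*w^2)) - 1/((w-1)^2) + 1/(2*w) := rfl
    rw [this]
    have htri1 := norm_add_le (-(1/(2*w^2)) - 1/((w-1)^2)) (1/(2*w))
    have hneg : ‖-(1/(2*w^2))‖ = ‖1/(2*w^2)‖ :=
      norm_neg _
    calc ‖-(1/(2*w^2)) - 1/((w-1)^2) + 1/(2*w)‖
        ≤ ‖-(1/(2*w^2)) - 1/((w-1)^2)‖ + ‖1/(2*w)‖ := htri1
    _ ≤ ‖-(1/(2*w^2))‖ + ‖1/((w-1)^2)‖ + ‖1/(2*w)‖ := by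
        have h := norm_add_le (-(1/(2*w^2))) (-(1/((w-1)^2)))
        rw [norm_neg (1/((w-1)^2))] at h
        have e : -(1/(2*w^2)) - 1/((w-1)^2) = -(1/(2*w^2)) + -(1/((w-1)^2)) := by ring
        rw [e]
        linarith
    _ ≤ 2/x^2 + 4/x^2 + 1/x := by rw [hneg]; linarith
    _ = 1/x + 6/x^2 := by ring
  -- the perturbation term
  have hterm : ‖(t:ℂ)/2 * alph w * alphd w‖ ≤ 0.0199 := by
    rw [norm_mul, norm_mul, norm_div, Complex.norm_real, Real.norm_eq_abs, Complex.norm_two,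
      _root_.abs_of_nonneg ht0]
    have hmain : (L/2 + 1.6) * (1/x + 6/x^2) ≤ 0.0796 := by
      have e : (1:ℝ)/x + 6/x^2 = (x + 6)/x^2 := by field_simp
      rw [e, ← mul_div_assoc, div_le_iff₀ (by positivity)]
      nlinarith [hLx, mul_nonneg (by linarith : (0:ℝ) ≤ x - 200) hxpos.le, hL0]
    have hA0 : (0:ℝ) ≤ ‖alph w‖ := norm_nonneg _
    have hB0 : (0:ℝ) ≤ ‖alphd w‖ := norm_nonneg _
    have hBle : (0:ℝ) ≤ 1/x + 6/x^2 := by positivity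
    have hAB : ‖alph w‖ * ‖alphd w‖ ≤ (L/2 + 1.6) * (1/x + 6/x^2) :=
      mul_le_mul habs_alph habs_alphd hB0 (by linarith)
    have ht4 : t/2 ≤ 1/4 := by linarith
    have hABnn : (0:ℝ) ≤ ‖alph w‖ * ‖alphd w‖ := mul_nonneg hA0 hB0
    calc t/2 * ‖alph w‖ * ‖alphd w‖
        = t/2 * (‖alph w‖ * ‖alphd w‖) := by ring
    _ ≤ (1/4) * ((L/2 + 1.6) * (1/x + 6/x^2)) := by
        apply mul_le_mul ht4 hAB hABnn (by norm_num)
    _ ≤ (1/4) * 0.0796 := by linarith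
    _ = 0.0199 := by norm_num
  have hterm' : -(0.0199:ℝ) ≤ ((t:ℂ)/2 * alph w * alphd w).re := by
    have h1 := neg_abs_le (((t:ℂ)/2 * alph w * alphd w).re)
    have h2 := Complex.abs_re_le_norm ((t:ℂ)/2 * alph w * alphd w)
    linarith
  rw [Complex.add_re]
  linarith [hrealph]

/-- Bound on `|γ|` (Proposition 7.1(i) / (1.14)). -/
theorem gamma_bound (t x y : ℝ)
    (ht : 0 < t) (ht' : t ≤ 1 / 2) (hy : 0 ≤ y) (hy' : y ≤ 1) (hx : 200 ≤ x) :
    ‖Mt t ((1 - (y : ℂ) + (x : ℂ) * Complex.I) / 2) /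
        Mt t ((1 + (y : ℂ) - (x : ℂ) * Complex.I) / 2)‖ ≤
      Real.exp (0.02 * y) * (x / (4 * Real.pi)) ^ (-y / 2) := by
  have hπ := Real.pi_pos
  have hxpos : (0:ℝ) < x := by linarith
  have him : ∀ σ : ℝ, ((σ:ℂ) + ((x/2 : ℝ):ℂ) * Complex.I).im ≠ 0 := by
    intro σ
    simp only [Complex.add_im, Complex.ofReal_im, Complex.mul_im, Complex.ofReal_re,
      Complex.I_im, Complex.I_re, mul_zero, mul_one, zero_add, Complex.ofReal_im]
    positivity
  have hne : ∀ σ : ℝ, Mt t ((σ:ℂ) + ((x/2 : ℝ):ℂ) * Complex.I) ≠ 0 :=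
    fun σ => Mt_ne_zero (him σ)
  set φ : ℝ → ℝ := fun σ => Real.log (‖Mt t ((σ:ℂ) + ((x/2 : ℝ):ℂ) * Complex.I)‖)
    with hφ
  set β : ℝ → ℝ := fun σ =>
    (alph ((σ:ℂ) + ((x/2 : ℝ):ℂ) * Complex.I)
      + (t:ℂ)/2 * alph ((σ:ℂ) + ((x/2 : ℝ):ℂ) * Complex.I)
        * alphd ((σ:ℂ) + ((x/2 : ℝ):ℂ) * Complex.I)).re with hβ
  have hderiv : ∀ σ : ℝ, HasDerivAt φ (β σ) σ := by
    intro σ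
    have hMt := hasDerivAt_Mt (t := t) (him σ)
    have hshift : HasDerivAt (fun z : ℂ => z + ((x/2 : ℝ):ℂ) * Complex.I) 1 ((σ:ℂ)) := by
      simpa using (hasDerivAt_id ((σ:ℂ))).add_const (((x/2 : ℝ):ℂ) * Complex.I)
    have hcomp := hMt.comp ((σ:ℂ)) hshift
    have hf : HasDerivAt (fun σ' : ℝ => Mt t ((σ':ℂ) + ((x/2 : ℝ):ℂ) * Complex.I))
        ((alph ((σ:ℂ) + ((x/2 : ℝ):ℂ) * Complex.I)
          + (t:ℂ)/2 * alph ((σ:ℂ) + ((x/2 : ℝ):ℂ) * Complex.I)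
            * alphd ((σ:ℂ) + ((x/2 : ℝ):ℂ) * Complex.I))
          * Mt t ((σ:ℂ) + ((x/2 : ℝ):ℂ) * Complex.I)) σ := by
      have := hcomp.comp_ofReal
      simpa [Function.comp] using this
    have h := hasDerivAt_log_abs hf (hne σ)
    rw [mul_div_cancel_right₀ _ (hne σ)] at h
    exact h
  -- endpoints
  have hnum : (1 - (y : ℂ) + (x : ℂ) * Complex.I) / 2
      = (((1-y)/2 : ℝ):ℂ) + ((x/2 : ℝ):ℂ) * Complex.I := by
    push_cast; ring
  have hden : (1 + (y : ℂ) - (x : ℂ) * Complex.I) / 2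
      = (starRingEnd ℂ) ((((1+y)/2 : ℝ):ℂ) + ((x/2 : ℝ):ℂ) * Complex.I) := by
    rw [map_add, map_mul, Complex.conj_ofReal, Complex.conj_ofReal, Complex.conj_I]
    push_cast; ring
  rw [hnum, hden, Mt_conj (him _), norm_div, Complex.norm_conj]
  have hpos1 : 0 < ‖Mt t ((((1-y)/2 : ℝ):ℂ) + ((x/2 : ℝ):ℂ) * Complex.I)‖ :=
    norm_pos_iff.mpr (hne _)
  have hpos2 : 0 < ‖Mt t ((((1+y)/2 : ℝ):ℂ) + ((x/2 : ℝ):ℂ) * Complex.I)‖ :=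
    norm_pos_iff.mpr (hne _)
  set L := Real.log (x/(4*Real.pi)) with hL
  -- the mean value estimate
  have hkey : φ ((1-y)/2) - φ ((1+y)/2) ≤ 0.02*y - y * L / 2 := by
    rcases eq_or_lt_of_le hy with hy0 | hy0
    · rw [← hy0]
      norm_num
    · have hlt : (1-y)/2 < (1+y)/2 := by linarith
      obtain ⟨c, hc, hceq⟩ := exists_hasDerivAt_eq_slope φ β hlt
        (fun σ _ => (hderiv σ).continuousAt.continuousWithinAt)
        (fun σ _ => hderiv σ)
      have hc1 : 0 ≤ c := le_trans (by linarith) hc.1.le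
      have hc2 : c ≤ 1 := le_trans hc.2.le (by linarith)
      have hb := key_bound hx hc1 hc2 ht.le ht'
      have hb' : L / 2 - 0.02 ≤ β c := hb
      rw [hceq] at hb'
      have hyd : (1+y)/2 - (1-y)/2 = y := by ring
      rw [hyd] at hb'
      have := (le_div_iff₀ hy0).mp hb'
      linarith
  have h1 : ‖Mt t ((((1-y)/2 : ℝ):ℂ) + ((x/2 : ℝ):ℂ) * Complex.I)‖
      = Real.exp (φ ((1-y)/2)) := (Real.exp_log hpos1).symm
  have h2 : ‖Mt t ((((1+y)/2 : ℝ):ℂ) + ((x/2 : ℝ):ℂ) * Complex.I)‖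
      = Real.exp (φ ((1+y)/2)) := (Real.exp_log hpos2).symm
  rw [h1, h2, ← Real.exp_sub]
  have hrpow : (x / (4 * Real.pi)) ^ (-y / 2) = Real.exp (L * (-y/2)) := by
    rw [Real.rpow_def_of_pos (by positivity), hL]
  rw [hrpow, ← Real.exp_add]
  apply Real.exp_le_exp.mpr
  have : L * (-y/2) = -(y * L / 2) := by ring
  linarith [hkey]
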